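/- For every φ > 0 and all z, z' ∈ ℝ^𝒜, one has ‖softmin_φ(z) − softmin_φ(z')‖₂ ≤ φ ‖z − z'‖₂, i.e. the map softmin_φ is φ-Lipschitz with respect to the Euclidean norm on ℝ^𝒜. -/

import Mathlib

open Finset

/-- The softmin map with parameter `φ`. -/
noncomputable def softmin {A : Type*} [Fintype A] (φ : ℝ) (z : A → ℝ) (a : A) : ℝ :=
  Real.exp (-φ * z a) / ∑ a', Real.exp (-φ * z a')

section aux

variable {A : Type*} [Fintype A] [Nonempty A]

lemma softmin_sum_exp_pos (φ : ℝ) (z : A → ℝ) : 0 < ∑ a', Real.exp (-φ * z a') :=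
  Finset.sum_pos (fun a _ => Real.exp_pos _) Finset.univ_nonempty

lemma softmin_nonneg (φ : ℝ) (z : A → ℝ) (a : A) : 0 ≤ softmin φ z a :=
  div_nonneg (Real.exp_pos _).le (softmin_sum_exp_pos φ z).le

lemma softmin_le_one (φ : ℝ) (z : A → ℝ) (a : A) : softmin φ z a ≤ 1 := by
  rw [softmin, div_le_one (softmin_sum_exp_pos φ z)]
  exact Finset.single_le_sum (f := fun a' => Real.exp (-φ * z a'))
    (fun b _ => (Real.exp_pos _).le) (Finset.mem_univ a)

/-- Derivative of each component of softmin along a line. -/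
lemma softmin_hasDerivAt (φ : ℝ) (z v : A → ℝ) (t : ℝ) (a : A) :
    HasDerivAt (fun s => softmin φ (fun b => z b + s * v b) a)
      (-φ * softmin φ (fun b => z b + t * v b) a *
        (v a - ∑ b, softmin φ (fun b => z b + t * v b) b * v b)) t := by
  set E : A → ℝ := fun b => Real.exp (-φ * (z b + t * v b)) with hE
  set S : ℝ := ∑ b, E b with hS'
  have hS : (0:ℝ) < S := Finset.sum_pos (fun b _ => Real.exp_pos _) Finset.univ_nonempty
  have hnum : ∀ b : A, HasDerivAt (fun s => Real.exp (-φ * (z b + s * v b)))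
      (-φ * v b * E b) t := by
    intro b
    have h1 : HasDerivAt (fun s : ℝ => -φ * (z b + s * v b)) (-φ * v b) t := by
      have := ((hasDerivAt_id t).mul_const (v b)).const_add (z b)
      simpa using (this.const_mul (-φ))
    simpa [hE, mul_comm] using h1.exp
  have hden : HasDerivAt (fun s => ∑ b, Real.exp (-φ * (z b + s * v b)))
      (∑ b, -φ * v b * E b) t :=
    HasDerivAt.fun_sum (fun b _ => hnum b)
  have hS0 : (∑ b, Real.exp (-φ * (z b + t * v b))) ≠ 0 :=
    (Finset.sum_pos (fun b _ => Real.exp_pos _) Finset.univ_nonempty).ne'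
  have hdiv := (hnum a).div hden hS0
  have hfun : (fun s => softmin φ (fun b => z b + s * v b) a)
      = fun s => Real.exp (-φ * (z a + s * v a)) / ∑ b, Real.exp (-φ * (z b + s * v b)) := by
    funext s; rfl
  rw [hfun]
  have hsm : ∀ b, softmin φ (fun c => z c + t * v c) b = E b / S := fun b => rfl
  have hsum1 : ∑ b, softmin φ (fun c => z c + t * v c) b * v b
      = (∑ b, E b * v b) / S := by
    rw [Finset.sum_div]
    exact Finset.sum_congr rfl fun b _ => by rw [hsm b, div_mul_eq_mul_div]
  have hsum2 : ∑ b, -φ * v b * E b = -φ * ∑ b, E b * v b := by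
    rw [Finset.mul_sum]
    exact Finset.sum_congr rfl fun b _ => by ring
  have hEe : (fun b : A => Real.exp (-φ * (z b + t * v b))) = E := rfl
  have hSe : (∑ b, Real.exp (-φ * (z b + t * v b))) = S := rfl
  have hEq : (-φ * v a * E a * S - E a * ∑ b, -φ * v b * E b) / S ^ 2
      = -φ * softmin φ (fun b => z b + t * v b) a
        * (v a - ∑ b, softmin φ (fun b => z b + t * v b) b * v b) := by
    rw [hsum1, hsum2, hsm a]
    field_simp
    ring
  rw [← hEq]
  exact hdiv
end aux

/-- Key algebraic inequality: if `0 ≤ p ≤ 1` pointwise, then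
`∑ p a ^ 2 * (v a - ∑ p b * v b) ^ 2 ≤ ∑ v a ^ 2`. -/
lemma softmin_key_ineq {A : Type*} [Fintype A] (p v : A → ℝ)
    (h0 : ∀ a, 0 ≤ p a) (h1 : ∀ a, p a ≤ 1) (hs : ∑ a, p a = 1) :
    ∑ a, p a ^ 2 * (v a - ∑ b, p b * v b) ^ 2 ≤ ∑ a, v a ^ 2 := by
  set s := ∑ b, p b * v b with hsdef
  have step1 : ∑ a, p a ^ 2 * (v a - s) ^ 2 ≤ ∑ a, p a * (v a - s) ^ 2 := by
    apply Finset.sum_le_sum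
    intro a _
    have : p a ^ 2 ≤ p a := by nlinarith [h0 a, h1 a]
    exact mul_le_mul_of_nonneg_right this (sq_nonneg _)
  have step2 : ∑ a, p a * (v a - s) ^ 2 = (∑ a, p a * v a ^ 2) - s ^ 2 := by
    have expand : ∀ a : A, p a * (v a - s) ^ 2
        = p a * v a ^ 2 - 2 * s * (p a * v a) + s ^ 2 * p a := by
      intro a; ring
    rw [Finset.sum_congr rfl (fun a _ => expand a)]
    rw [Finset.sum_add_distrib, Finset.sum_sub_distrib, ← Finset.mul_sum,
      ← Finset.mul_sum, ← hsdef, hs]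
    ring
  have step3 : (∑ a, p a * v a ^ 2) - s ^ 2 ≤ ∑ a, v a ^ 2 := by
    have : ∑ a, p a * v a ^ 2 ≤ ∑ a, v a ^ 2 := by
      apply Finset.sum_le_sum
      intro a _
      nlinarith [h0 a, h1 a, sq_nonneg (v a)]
    nlinarith [sq_nonneg s]
  linarith

/-- `softmin_φ` is `φ`-Lipschitz for the Euclidean norm on `ℝ^𝒜`:
`‖softmin_φ(z) − softmin_φ(z')‖₂ ≤ φ ‖z − z'‖₂`. -/
theorem softmin_lipschitz {A : Type*} [Fintype A] [Nonempty A]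
    (φ : ℝ) (hφ : 0 < φ) (z z' : A → ℝ) :
    Real.sqrt (∑ a, (softmin φ z a - softmin φ z' a) ^ 2) ≤
      φ * Real.sqrt (∑ a, (z a - z' a) ^ 2) := by
  classical
  set v : A → ℝ := fun b => z' b - z b with hv
  -- path in Euclidean space
  set e : EuclideanSpace ℝ A ≃L[ℝ] (A → ℝ) := EuclideanSpace.equiv A ℝ with he
  set f : ℝ → EuclideanSpace ℝ A :=
    fun t => e.symm (fun a => softmin φ (fun b => z b + t * v b) a) with hf
  set f' : ℝ → EuclideanSpace ℝ A :=
    fun t => e.symm (fun a => -φ * softmin φ (fun b => z b + t * v b) a *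
      (v a - ∑ b, softmin φ (fun b => z b + t * v b) b * v b)) with hf'
  have hderiv : ∀ t : ℝ, HasDerivAt f (f' t) t := by
    intro t
    have hg : HasDerivAt (fun t => (fun a => softmin φ (fun b => z b + t * v b) a))
        (fun a => -φ * softmin φ (fun b => z b + t * v b) a *
          (v a - ∑ b, softmin φ (fun b => z b + t * v b) b * v b)) t :=
      hasDerivAt_pi.2 (fun a => softmin_hasDerivAt φ z v t a)
    exact (e.symm.hasFDerivAt.comp_hasDerivAt t hg)
  set C : ℝ := φ * Real.sqrt (∑ a, (z a - z' a) ^ 2) with hC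
  have hbound : ∀ t : ℝ, ‖f' t‖ ≤ C := by
    intro t
    set p : A → ℝ := fun a => softmin φ (fun b => z b + t * v b) a with hp
    have hnorm : ‖f' t‖ = Real.sqrt (∑ a,
        (-φ * p a * (v a - ∑ b, p b * v b)) ^ 2) := by
      rw [hf', EuclideanSpace.norm_eq]
      congr 1
      apply Finset.sum_congr rfl
      intro a _
      rw [Real.norm_eq_abs, sq_abs]
      rfl
    rw [hnorm, hC]
    have hsum : ∑ a, p a = 1 := by
      rw [hp]
      simp only [softmin]
      rw [← Finset.sum_div]
      exact div_self (softmin_sum_exp_pos φ _).ne'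
    have key := softmin_key_ineq p v (fun a => softmin_nonneg φ _ a)
      (fun a => softmin_le_one φ _ a) hsum
    have h1 : ∑ a, (-φ * p a * (v a - ∑ b, p b * v b)) ^ 2
        = φ ^ 2 * ∑ a, p a ^ 2 * (v a - ∑ b, p b * v b) ^ 2 := by
      rw [Finset.mul_sum]
      apply Finset.sum_congr rfl
      intro a _; ring
    have h2 : ∑ a, (z a - z' a) ^ 2 = ∑ a, v a ^ 2 := by
      apply Finset.sum_congr rfl
      intro a _
      rw [hv]; ring
    rw [h1, h2]
    have : φ ^ 2 * ∑ a, p a ^ 2 * (v a - ∑ b, p b * v b) ^ 2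
        ≤ φ ^ 2 * ∑ a, v a ^ 2 := by
      apply mul_le_mul_of_nonneg_left key (sq_nonneg φ)
    calc Real.sqrt (φ ^ 2 * ∑ a, p a ^ 2 * (v a - ∑ b, p b * v b) ^ 2)
        ≤ Real.sqrt (φ ^ 2 * ∑ a, v a ^ 2) := Real.sqrt_le_sqrt this
      _ = φ * Real.sqrt (∑ a, v a ^ 2) := by
          rw [Real.sqrt_mul (sq_nonneg φ), Real.sqrt_sq hφ.le]
  have main : ‖f 1 - f 0‖ ≤ C :=
    norm_image_sub_le_of_norm_deriv_le_segment_01'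
      (fun t _ => (hderiv t).hasDerivWithinAt)
      (fun t _ => hbound t)
  have hnorm2 : ‖f 1 - f 0‖ = Real.sqrt (∑ a, (softmin φ z a - softmin φ z' a) ^ 2) := by
    rw [EuclideanSpace.norm_eq]
    congr 1
    apply Finset.sum_congr rfl
    intro a _
    have hf1 : (f 1 - f 0) a = softmin φ z' a - softmin φ z a := by
      simp only [hf, hv]
      have h1 : (fun b => z b + 1 * (z' b - z b)) = z' := by funext b; ring
      have h0 : (fun b => z b + 0 * (z' b - z b)) = z := by funext b; ring
      simp [h1, h0, e]
    rw [Real.norm_eq_abs, sq_abs, hf1]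
    ring
  rw [hnorm2] at main
  exact main
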